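/- arXiv:2012.07572 — 2 statements merged into one kernel-verified Lean document; each statement's English description precedes it below -/
import Mathlib

section
/- Let X^(1),…,X^(M) ∈ ℝ^d with M ≥ 2 and let g : ℝ^d → ℝ^p be Lipschitz continuous with Lipschitz constant L. Let 𝒢 ∈ ℝ^{p×M} be the matrix with columns g(X^(i)) − ḡ. Then the spectral norm satisfies ‖𝒢𝒢ᵀ‖ ≤ 2(M−1) L² tr(P), where tr(P) := (1/(M−1)) Σ_{i=1}^M ‖X^(i) − x̄‖². -/
open Matrix MeasureTheory
open scoped Matrix.Norms.L2Operator NNReal RealInnerProductSpace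

/-- The ensemble mean `x̄ = (1/M) ∑ᵢ X⁽ⁱ⁾`. -/
noncomputable def ensMean {d M : ℕ} (X : Fin M → EuclideanSpace ℝ (Fin d)) :
    EuclideanSpace ℝ (Fin d) :=
  (M : ℝ)⁻¹ • ∑ i, X i

/-- The matrix of ensemble deviations, with columns `X⁽ⁱ⁾ − x̄`. -/
noncomputable def devMat {d M : ℕ} (X : Fin M → EuclideanSpace ℝ (Fin d)) :
    Matrix (Fin d) (Fin M) ℝ :=
  Matrix.of fun j i => (X i - ensMean X) j

/-- The trace of the empirical covariance matrix,
`tr(P) = (1/(M−1)) ∑ᵢ ‖X⁽ⁱ⁾ − x̄‖²`. -/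
noncomputable def trP {d M : ℕ} (X : Fin M → EuclideanSpace ℝ (Fin d)) : ℝ :=
  ((M : ℝ) - 1)⁻¹ * ∑ i, ‖X i - ensMean X‖ ^ 2

/-!
`‖𝒢𝒢ᵀ‖ = ‖𝒢‖²` is at most the squared Frobenius norm `∑ᵢ ‖g(X⁽ⁱ⁾) − ḡ‖²`. Since the mean
minimises the sum of squared distances, this is at most `∑ᵢ ‖g(X⁽ⁱ⁾) − g(x̄)‖²`, which the
Lipschitz bound controls by `L² ∑ᵢ ‖X⁽ⁱ⁾ − x̄‖² = (M − 1) L² tr(P)`; the factor `2` is slack.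
-/

namespace Matrix

variable {𝕜 m n : Type*} [RCLike 𝕜] [Fintype n]

lemma norm_mulVec_apply_sq_le (A : Matrix m n 𝕜) (x : n → 𝕜) (i : m) :
    ‖(A *ᵥ x) i‖ ^ 2 ≤ (∑ j, ‖A i j‖ ^ 2) * ∑ j, ‖x j‖ ^ 2 :=
  calc ‖(A *ᵥ x) i‖ ^ 2 ≤ (∑ j, ‖A i j‖ * ‖x j‖) ^ 2 := by
        gcongr
        exact (norm_sum_le _ _).trans_eq (by simp only [norm_mul])
    _ ≤ (∑ j, ‖A i j‖ ^ 2) * ∑ j, ‖x j‖ ^ 2 := Finset.sum_mul_sq_le_sq_mul_sq _ _ _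

lemma l2_opNorm_sq_le_sum_norm_sq [Fintype m] [DecidableEq n] (A : Matrix m n 𝕜) :
    ‖A‖ ^ 2 ≤ ∑ i, ∑ j, ‖A i j‖ ^ 2 := by
  set S := ∑ i, ∑ j, ‖A i j‖ ^ 2
  have hS : 0 ≤ S := by positivity
  have hbound : ∀ x : EuclideanSpace 𝕜 n, ‖toEuclideanLin A x‖ ≤ √S * ‖x‖ := by
    intro x
    rw [← Real.sqrt_sq (norm_nonneg x), ← Real.sqrt_mul hS, Real.le_sqrt (norm_nonneg _)
      (by positivity), EuclideanSpace.norm_sq_eq, EuclideanSpace.norm_sq_eq, Finset.sum_mul]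
    exact Finset.sum_le_sum fun i _ => norm_mulVec_apply_sq_le A x.ofLp i
  calc ‖A‖ ^ 2 ≤ √S ^ 2 := by
        gcongr
        exact ContinuousLinearMap.opNorm_le_bound _ (Real.sqrt_nonneg S) hbound
    _ = S := Real.sq_sqrt hS

end Matrix

section EnsembleMean

variable {d M : ℕ}

lemma sum_sub_ensMean (X : Fin M → EuclideanSpace ℝ (Fin d)) : ∑ i, (X i - ensMean X) = 0 := by
  rcases eq_or_ne M 0 with rfl | hM
  · simp
  · rw [Finset.sum_sub_distrib, Finset.sum_const, Finset.card_univ, Fintype.card_fin, ensMean,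
      ← Nat.cast_smul_eq_nsmul ℝ, smul_smul, mul_inv_cancel₀ (Nat.cast_ne_zero.mpr hM), one_smul,
      sub_self]

lemma sum_norm_sub_sq_eq (X : Fin M → EuclideanSpace ℝ (Fin d)) (c : EuclideanSpace ℝ (Fin d)) :
    ∑ i, ‖X i - c‖ ^ 2 = ∑ i, ‖X i - ensMean X‖ ^ 2 + M * ‖ensMean X - c‖ ^ 2 := by
  have hsplit : ∀ i, ‖X i - c‖ ^ 2 = ‖X i - ensMean X‖ ^ 2
      + 2 * ⟪X i - ensMean X, ensMean X - c⟫ + ‖ensMean X - c‖ ^ 2 := fun i => by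
    rw [← norm_add_sq_real, sub_add_sub_cancel]
  simp only [hsplit, Finset.sum_add_distrib, ← Finset.mul_sum, ← sum_inner, sum_sub_ensMean,
    inner_zero_left, Finset.sum_const, Finset.card_univ, Fintype.card_fin, nsmul_eq_mul]
  ring

lemma sum_norm_sub_ensMean_sq_le (X : Fin M → EuclideanSpace ℝ (Fin d))
    (c : EuclideanSpace ℝ (Fin d)) : ∑ i, ‖X i - ensMean X‖ ^ 2 ≤ ∑ i, ‖X i - c‖ ^ 2 := by
  rw [sum_norm_sub_sq_eq X c]
  exact le_add_of_nonneg_right (by positivity)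

lemma sum_norm_sub_ensMean_sq_comp_le {p : ℕ} {L : ℝ≥0}
    {g : EuclideanSpace ℝ (Fin d) → EuclideanSpace ℝ (Fin p)} (hg : LipschitzWith L g)
    (X : Fin M → EuclideanSpace ℝ (Fin d)) :
    ∑ i, ‖g (X i) - ensMean (g ∘ X)‖ ^ 2 ≤ (L : ℝ) ^ 2 * ∑ i, ‖X i - ensMean X‖ ^ 2 := by
  rw [Finset.mul_sum]
  refine (sum_norm_sub_ensMean_sq_le (g ∘ X) (g (ensMean X))).trans
    (Finset.sum_le_sum fun i _ => ?_)
  rw [← mul_pow]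
  gcongr
  simpa only [Function.comp_apply, dist_eq_norm] using hg.dist_le_mul (X i) (ensMean X)

lemma sub_one_mul_trP (X : Fin M → EuclideanSpace ℝ (Fin d)) :
    ((M : ℝ) - 1) * trP X = ∑ i, ‖X i - ensMean X‖ ^ 2 := by
  rcases eq_or_ne (M : ℝ) 1 with hM | hM
  · -- `trP` divides by `0` here, but a single point coincides with its mean
    obtain rfl : M = 1 := by exact_mod_cast hM
    simp [ensMean]
  · rw [trP, ← mul_assoc, mul_inv_cancel₀ (sub_ne_zero.mpr hM), one_mul]

lemma norm_devMat_mul_transpose_le (Y : Fin M → EuclideanSpace ℝ (Fin d)) :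
    ‖devMat Y * (devMat Y)ᵀ‖ ≤ ∑ i, ‖Y i - ensMean Y‖ ^ 2 := by
  have hnorm : ‖devMat Y * (devMat Y)ᵀ‖ = ‖(devMat Y)ᵀ‖ ^ 2 := by
    simpa [sq] using Matrix.l2_opNorm_conjTranspose_mul_self (devMat Y)ᵀ
  rw [hnorm]
  refine (Matrix.l2_opNorm_sq_le_sum_norm_sq _).trans_eq (Finset.sum_congr rfl fun i _ => ?_)
  rw [EuclideanSpace.norm_sq_eq]
  rfl

end EnsembleMean

theorem obs_covariance_specNorm_bound_general {d p M : ℕ} (L : ℝ≥0)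
    (g : EuclideanSpace ℝ (Fin d) → EuclideanSpace ℝ (Fin p)) (hg : LipschitzWith L g)
    (X : Fin M → EuclideanSpace ℝ (Fin d)) :
    ‖devMat (g ∘ X) * (devMat (g ∘ X))ᵀ‖ ≤ 2 * ((M : ℝ) - 1) * (L : ℝ) ^ 2 * trP X := by
  calc ‖devMat (g ∘ X) * (devMat (g ∘ X))ᵀ‖ ≤ ∑ i, ‖g (X i) - ensMean (g ∘ X)‖ ^ 2 :=
        norm_devMat_mul_transpose_le (g ∘ X)
    _ ≤ (L : ℝ) ^ 2 * ∑ i, ‖X i - ensMean X‖ ^ 2 := sum_norm_sub_ensMean_sq_comp_le hg X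
    _ = (L : ℝ) ^ 2 * ((M - 1) * trP X) := by rw [sub_one_mul_trP]
    _ ≤ 2 * ((L : ℝ) ^ 2 * ((M - 1) * trP X)) :=
        le_mul_of_one_le_left (by rw [sub_one_mul_trP]; positivity) one_le_two
    _ = 2 * ((M : ℝ) - 1) * (L : ℝ) ^ 2 * trP X := by ring

/-- spectral norm bound `‖𝒢𝒢ᵀ‖ ≤ 2(M−1) L² tr(P)`. -/
theorem obs_covariance_specNorm_bound {d p M : ℕ} (hM : 2 ≤ M) (L : ℝ≥0)
    (g : EuclideanSpace ℝ (Fin d) → EuclideanSpace ℝ (Fin p)) (hg : LipschitzWith L g)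
    (X : Fin M → EuclideanSpace ℝ (Fin d)) :
    ‖devMat (g ∘ X) * (devMat (g ∘ X))ᵀ‖ ≤ 2 * ((M : ℝ) - 1) * (L : ℝ) ^ 2 * trP X :=
  obs_covariance_specNorm_bound_general L g hg X
end

section
/- (Discrete Kalman gain bound.) Let X^(1),…,X^(M) ∈ ℝ^d with M ≥ 2, let g : ℝ^d → ℝ^p be Lipschitz with constant L, let C ∈ ℝ^{p×p} be symmetric positive definite and h ≥ 0. With E := [X^(i) − x̄]_{i=1}^M, 𝒢 := [g(X^(i)) − ḡ]_{i=1}^M, the EnKF Kalman gain K := (1/(M−1)) E 𝒢ᵀ (C + (h/(M−1)) 𝒢𝒢ᵀ)⁻¹ satisfies ‖K‖ ≤ L ‖C⁻¹‖ tr(P), where tr(P) := (1/(M−1)) Σ_{i=1}^M ‖X^(i) − x̄‖². -/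
/-!
Write `K = (M-1)⁻¹ (E 𝒢ᵀ) B⁻¹` with `B = C + (h/(M-1)) 𝒢 𝒢ᵀ ≥ C`. Coercivity of `C`,
`‖x‖² ≤ ‖C⁻¹‖ xᵀ C x`, is Cauchy–Schwarz for the form of `C` at `x` and `C⁻¹ x`; it passes to
`B ≥ C`, and at `x = B⁻¹ y` it gives `‖B⁻¹‖ ≤ ‖C⁻¹‖`. With `vᵢ = X⁽ⁱ⁾ - x̄` and
`wᵢ = g(X⁽ⁱ⁾) - ḡ`, the cross-covariance `E 𝒢ᵀ = ∑ᵢ vᵢ wᵢᵀ` has norm at most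
`∑ᵢ ‖vᵢ‖ ‖wᵢ‖ ≤ (∑ᵢ ‖vᵢ‖²)^½ (∑ᵢ ‖wᵢ‖²)^½`, and since the mean minimises the sum of squared
distances, `∑ᵢ ‖wᵢ‖² ≤ ∑ᵢ ‖g(X⁽ⁱ⁾) - g(x̄)‖² ≤ L² ∑ᵢ ‖vᵢ‖²`.
-/

open Matrix MeasureTheory
open scoped Matrix.Norms.L2Operator NNReal RealInnerProductSpace

open WithLp

theorem le_of_mul_self_le_mul_right {α : Type*} [Ring α] [LinearOrder α] [IsStrictOrderedRing α]
    {a b : α} (hb : 0 ≤ b) (h : a * a ≤ b * a) : a ≤ b :=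
  not_lt.1 fun hba => (mul_lt_mul_of_pos_right hba (hb.trans_lt hba)).not_ge h

namespace EuclideanSpace

variable {n : Type*} [Fintype n]

theorem norm_dotProduct_le {𝕜 : Type*} [RCLike 𝕜] (x y : EuclideanSpace 𝕜 n) :
    ‖ofLp x ⬝ᵥ ofLp y‖ ≤ ‖x‖ * ‖y‖ := by
  have hstar : ‖(toLp 2 (star (ofLp x)) : EuclideanSpace 𝕜 n)‖ = ‖x‖ := by
    simp [EuclideanSpace.norm_eq]
  simpa [inner_eq_star_dotProduct, dotProduct_comm, hstar] using
    norm_inner_le_norm (𝕜 := 𝕜) (toLp 2 (star (ofLp x)) : EuclideanSpace 𝕜 n) y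

theorem dotProduct_le (x y : EuclideanSpace ℝ n) : ofLp x ⬝ᵥ ofLp y ≤ ‖x‖ * ‖y‖ :=
  (Real.le_norm_self _).trans (norm_dotProduct_le x y)

end EuclideanSpace

namespace Matrix

variable {m n : Type*} [Fintype m] [Fintype n] [DecidableEq n]

section RCLike

variable {𝕜 : Type*} [RCLike 𝕜]

theorem l2_opNorm_le_of_mulVec_le (A : Matrix m n 𝕜) {K : ℝ} (hK : 0 ≤ K)
    (h : ∀ y : EuclideanSpace 𝕜 n, ‖toLp 2 (A *ᵥ ofLp y)‖ ≤ K * ‖y‖) : ‖A‖ ≤ K :=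
  ContinuousLinearMap.opNorm_le_bound _ hK h

theorem l2_opNorm_vecMulVec_le (v : EuclideanSpace 𝕜 m) (w : EuclideanSpace 𝕜 n) :
    ‖vecMulVec (ofLp v) (ofLp w)‖ ≤ ‖v‖ * ‖w‖ := by
  refine l2_opNorm_le_of_mulVec_le _ (by positivity) fun y => ?_
  rw [vecMulVec_mulVec, op_smul_eq_smul, WithLp.toLp_smul, toLp_ofLp, norm_smul, mul_comm,
    mul_assoc]
  gcongr
  exact EuclideanSpace.norm_dotProduct_le w y

end RCLike

theorem PosDef.norm_sq_le_l2_opNorm_inv_mul {C : Matrix n n ℝ} (hC : C.PosDef)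
    (x : EuclideanSpace ℝ n) :
    ‖x‖ ^ 2 ≤ ‖C⁻¹‖ * (ofLp x ⬝ᵥ C *ᵥ ofLp x) := by
  have hdet : IsUnit C.det := (isUnit_iff_isUnit_det C).mp hC.isUnit
  have hsymm : C.IsSymm := by
    rw [IsSymm, ← conjTranspose_eq_transpose_of_trivial]
    exact hC.isHermitian
  have hnonneg (v : n → ℝ) : 0 ≤ v ⬝ᵥ C *ᵥ v := by
    simpa using hC.posSemidef.dotProduct_mulVec_nonneg v
  have hCS := (toBilin' C).apply_sq_le_of_symm (fun v => (toBilin'_apply' C v v).symm ▸ hnonneg v)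
    (LinearMap.BilinForm.isSymm_iff.mp (isSymm_toBilin'_iff_isSymm.mpr hsymm))
    (ofLp x) (C⁻¹ *ᵥ ofLp x)
  simp only [toBilin'_apply', mulVec_mulVec, mul_nonsing_inv _ hdet, one_mulVec] at hCS
  have hxx : ofLp x ⬝ᵥ ofLp x = ‖x‖ ^ 2 := by
    rw [EuclideanSpace.real_norm_sq_eq]
    simp [dotProduct, sq]
  have hinv : C⁻¹ *ᵥ ofLp x ⬝ᵥ ofLp x ≤ ‖C⁻¹‖ * ‖x‖ ^ 2 := calc
    _ ≤ ‖toLp 2 (C⁻¹ *ᵥ ofLp x)‖ * ‖x‖ := EuclideanSpace.dotProduct_le _ x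
    _ ≤ ‖C⁻¹‖ * ‖x‖ * ‖x‖ := by gcongr; exact l2_opNorm_mulVec _ x
    _ = ‖C⁻¹‖ * ‖x‖ ^ 2 := by ring
  have hq := hnonneg (ofLp x)
  rw [hxx] at hCS
  refine le_of_mul_self_le_mul_right (by positivity) ?_
  calc ‖x‖ ^ 2 * ‖x‖ ^ 2 ≤ (ofLp x ⬝ᵥ C *ᵥ ofLp x) * (C⁻¹ *ᵥ ofLp x ⬝ᵥ ofLp x) := by
        rw [← sq]; exact hCS
    _ ≤ (ofLp x ⬝ᵥ C *ᵥ ofLp x) * (‖C⁻¹‖ * ‖x‖ ^ 2) := by gcongr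
    _ = ‖C⁻¹‖ * (ofLp x ⬝ᵥ C *ᵥ ofLp x) * ‖x‖ ^ 2 := by ring

theorem PosDef.l2_opNorm_inv_add_le {C B : Matrix n n ℝ} (hC : C.PosDef) (hB : B.PosSemidef) :
    ‖(C + B)⁻¹‖ ≤ ‖C⁻¹‖ := by
  have hdet : IsUnit (C + B).det :=
    (isUnit_iff_isUnit_det _).mp (hC.add_posSemidef hB).isUnit
  refine l2_opNorm_le_of_mulVec_le _ (norm_nonneg _) fun y => ?_
  set x : EuclideanSpace ℝ n := toLp 2 ((C + B)⁻¹ *ᵥ ofLp y)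
  have hx : (C + B) *ᵥ ofLp x = ofLp y := by
    simp [x, mulVec_mulVec, mul_nonsing_inv _ hdet]
  refine le_of_mul_self_le_mul_right (by positivity) ?_
  calc ‖x‖ * ‖x‖ = ‖x‖ ^ 2 := by ring
    _ ≤ ‖C⁻¹‖ * (ofLp x ⬝ᵥ C *ᵥ ofLp x) := hC.norm_sq_le_l2_opNorm_inv_mul x
    _ ≤ ‖C⁻¹‖ * (ofLp x ⬝ᵥ (C + B) *ᵥ ofLp x) := by
      gcongr
      rw [add_mulVec, dotProduct_add, le_add_iff_nonneg_right]
      simpa using hB.dotProduct_mulVec_nonneg (ofLp x)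
    _ ≤ ‖C⁻¹‖ * (‖x‖ * ‖y‖) := by
      rw [hx]
      gcongr
      exact EuclideanSpace.dotProduct_le x y
    _ = ‖C⁻¹‖ * ‖y‖ * ‖x‖ := by ring

end Matrix

theorem sum_sub_average_eq_zero {ι E : Type*} [Fintype ι] [AddCommGroup E] [Module ℝ E]
    (a : ι → E) : ∑ i, (a i - (Fintype.card ι : ℝ)⁻¹ • ∑ j, a j) = 0 := by
  rw [Finset.sum_sub_distrib, Finset.sum_const, Finset.card_univ, ← Nat.cast_smul_eq_nsmul ℝ,
    smul_smul, sub_eq_zero]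
  rcases isEmpty_or_nonempty ι with hι | hι
  · simp
  · rw [mul_inv_cancel₀ (by positivity), one_smul]

theorem sum_norm_sub_average_sq_le {ι E : Type*} [Fintype ι] [NormedAddCommGroup E]
    [InnerProductSpace ℝ E] (a : ι → E) (c : E) :
    ∑ i, ‖a i - (Fintype.card ι : ℝ)⁻¹ • ∑ j, a j‖ ^ 2 ≤ ∑ i, ‖a i - c‖ ^ 2 := by
  set m := (Fintype.card ι : ℝ)⁻¹ • ∑ j, a j
  calc ∑ i, ‖a i - m‖ ^ 2 ≤ ∑ i, ‖a i - m‖ ^ 2 + ∑ _i : ι, ‖m - c‖ ^ 2 :=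
        le_add_of_nonneg_right (by positivity)
    _ = ∑ i, (‖a i - m‖ ^ 2 + 2 * ⟪a i - m, m - c⟫ + ‖m - c‖ ^ 2) := by
        rw [Finset.sum_add_distrib, Finset.sum_add_distrib, ← Finset.mul_sum, ← sum_inner,
          sum_sub_average_eq_zero, inner_zero_left, mul_zero, add_zero]
    _ = ∑ i, ‖a i - c‖ ^ 2 := by
        simp_rw [← norm_add_sq_real, sub_add_sub_cancel]

section Ensemble

variable {d p M : ℕ}

theorem devMat_mul_transpose (X : Fin M → EuclideanSpace ℝ (Fin d))
    (Y : Fin M → EuclideanSpace ℝ (Fin p)) :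
    devMat X * (devMat Y)ᵀ =
      ∑ i, vecMulVec (ofLp (X i - ensMean X)) (ofLp (Y i - ensMean Y)) := by
  ext j k
  simp [devMat, mul_apply, vecMulVec_apply, Matrix.sum_apply]

theorem l2_opNorm_devMat_mul_transpose_le_sum (X : Fin M → EuclideanSpace ℝ (Fin d))
    (Y : Fin M → EuclideanSpace ℝ (Fin p)) :
    ‖devMat X * (devMat Y)ᵀ‖ ≤ ∑ i, ‖X i - ensMean X‖ * ‖Y i - ensMean Y‖ := by
  rw [devMat_mul_transpose]
  exact (norm_sum_le _ _).trans (Finset.sum_le_sum fun i _ => l2_opNorm_vecMulVec_le _ _)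

theorem LipschitzWith.sum_norm_sub_ensMean_comp_sq_le {L : ℝ≥0}
    {g : EuclideanSpace ℝ (Fin d) → EuclideanSpace ℝ (Fin p)} (hg : LipschitzWith L g)
    (X : Fin M → EuclideanSpace ℝ (Fin d)) :
    ∑ i, ‖(g ∘ X) i - ensMean (g ∘ X)‖ ^ 2 ≤ (L : ℝ) ^ 2 * ∑ i, ‖X i - ensMean X‖ ^ 2 :=
  calc ∑ i, ‖(g ∘ X) i - ensMean (g ∘ X)‖ ^ 2 ≤ ∑ i, ‖g (X i) - g (ensMean X)‖ ^ 2 := by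
        simpa [ensMean] using sum_norm_sub_average_sq_le (g ∘ X) (g (ensMean X))
    _ ≤ ∑ i, ((L : ℝ) * ‖X i - ensMean X‖) ^ 2 :=
        Finset.sum_le_sum fun i _ => by gcongr; exact hg.norm_sub_le _ _
    _ = (L : ℝ) ^ 2 * ∑ i, ‖X i - ensMean X‖ ^ 2 := by
        simp_rw [mul_pow, Finset.mul_sum]

theorem LipschitzWith.l2_opNorm_devMat_mul_transpose_le {L : ℝ≥0}
    {g : EuclideanSpace ℝ (Fin d) → EuclideanSpace ℝ (Fin p)} (hg : LipschitzWith L g)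
    (X : Fin M → EuclideanSpace ℝ (Fin d)) :
    ‖devMat X * (devMat (g ∘ X))ᵀ‖ ≤ (L : ℝ) * ∑ i, ‖X i - ensMean X‖ ^ 2 := by
  set S := ∑ i, ‖X i - ensMean X‖ ^ 2
  calc ‖devMat X * (devMat (g ∘ X))ᵀ‖
      ≤ ∑ i, ‖X i - ensMean X‖ * ‖(g ∘ X) i - ensMean (g ∘ X)‖ :=
        l2_opNorm_devMat_mul_transpose_le_sum X (g ∘ X)
    _ ≤ √S * √(∑ i, ‖(g ∘ X) i - ensMean (g ∘ X)‖ ^ 2) := Real.sum_mul_le_sqrt_mul_sqrt _ _ _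
    _ ≤ √S * √((L : ℝ) ^ 2 * S) := by gcongr; exact hg.sum_norm_sub_ensMean_comp_sq_le X
    _ = (L : ℝ) * S := by
        rw [Real.sqrt_mul (by positivity), Real.sqrt_sq L.coe_nonneg, mul_left_comm,
          Real.mul_self_sqrt (by positivity)]

end Ensemble

/-- the EnKF Kalman gain
`K = (1/(M−1)) E 𝒢ᵀ (C + (h/(M−1)) 𝒢𝒢ᵀ)⁻¹` satisfies `‖K‖ ≤ L ‖C⁻¹‖ tr(P)`. -/
theorem discrete_kalman_gain_bound {d p M : ℕ} (hM : 2 ≤ M) (L : ℝ≥0)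
    (g : EuclideanSpace ℝ (Fin d) → EuclideanSpace ℝ (Fin p)) (hg : LipschitzWith L g)
    (C : Matrix (Fin p) (Fin p) ℝ) (hC : C.PosDef) (h : ℝ) (hh : 0 ≤ h)
    (X : Fin M → EuclideanSpace ℝ (Fin d)) :
    ‖(((M : ℝ) - 1)⁻¹ • (devMat X * (devMat (g ∘ X))ᵀ)) *
        (C + (h / ((M : ℝ) - 1)) • (devMat (g ∘ X) * (devMat (g ∘ X))ᵀ))⁻¹‖ ≤
      (L : ℝ) * ‖C⁻¹‖ * trP X := by
  have hM1 : (0 : ℝ) < (M : ℝ) - 1 := by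
    linarith [show (2 : ℝ) ≤ M by exact_mod_cast hM]
  have hGG : ((h / ((M : ℝ) - 1)) • (devMat (g ∘ X) * (devMat (g ∘ X))ᵀ)).PosSemidef := by
    refine .smul ?_ (div_nonneg hh hM1.le)
    simpa [conjTranspose_eq_transpose_of_trivial] using
      posSemidef_self_mul_conjTranspose (devMat (g ∘ X))
  refine (l2_opNorm_mul _ _).trans ?_
  rw [norm_smul, Real.norm_of_nonneg (by positivity), trP]
  calc _ ≤ ((M : ℝ) - 1)⁻¹ * ((L : ℝ) * ∑ i, ‖X i - ensMean X‖ ^ 2) * ‖C⁻¹‖ := by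
        gcongr
        · exact hg.l2_opNorm_devMat_mul_transpose_le X
        · exact hC.l2_opNorm_inv_add_le hGG
    _ = _ := by ring
end
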